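/- For all p, q ∈ ℝ³, with p⁰ = √(1+|p|²), q⁰ = √(1+|q|²), and g = √(2(p⁰q⁰ − p·q − 1)), one has |p−q|/√(p⁰q⁰) ≤ g ≤ |p−q|. -/

import Mathlib

/-!
Writing `a = p⁰`, `b = q⁰`, the identity `2 (a b - p·q - 1) = |p - q|² - (a - b)²` gives the upper
bound at once. For the lower bound one needs `a b (a - b)² ≤ (a b - 1) |p - q|²`. Multiply by
`(a + b)²`: then `(a² - b²)² = (|p|² - |q|²)² ≤ |p - q|² |p + q|²` by Cauchy–Schwarz, and
`a b |p + q|² ≤ (a b - 1) (a + b)²` because the difference of the two sides is at least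
`(a |q| - b |p|)²`.
-/

noncomputable def energy (p : EuclideanSpace ℝ (Fin 3)) : ℝ := Real.sqrt (1 + ‖p‖^2)

noncomputable def relMom (p q : EuclideanSpace ℝ (Fin 3)) : ℝ :=
  Real.sqrt (2 * (energy p * energy q - (inner ℝ p q : ℝ) - 1))

section InnerProductSpace

variable {E : Type*} [NormedAddCommGroup E] {a b : ℝ} {p q : E}

lemma mul_norm_add_sq_le (ha₀ : 0 ≤ a) (hb₀ : 0 ≤ b)
    (ha : a ^ 2 = 1 + ‖p‖ ^ 2) (hb : b ^ 2 = 1 + ‖q‖ ^ 2) :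
    a * b * ‖p + q‖ ^ 2 ≤ (a * b - 1) * (a + b) ^ 2 :=
  calc a * b * ‖p + q‖ ^ 2 ≤ a * b * (‖p‖ + ‖q‖) ^ 2 := by
        have := mul_nonneg ha₀ hb₀
        gcongr
        exact norm_add_le p q
    _ ≤ a * b * (‖p‖ + ‖q‖) ^ 2 + (a * ‖q‖ - b * ‖p‖) ^ 2 := le_add_of_nonneg_right (sq_nonneg _)
    _ = (a * b - 1) * (a + b) ^ 2 := by
        linear_combination -(a * b + b ^ 2) * ha - (a * b + a ^ 2) * hb

variable [InnerProductSpace ℝ E]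

lemma sq_norm_sq_sub_norm_sq_le (p q : E) :
    (‖p‖ ^ 2 - ‖q‖ ^ 2) ^ 2 ≤ ‖p - q‖ ^ 2 * ‖p + q‖ ^ 2 := by
  have hcs : inner ℝ p q * inner ℝ p q ≤ ‖p‖ ^ 2 * ‖q‖ ^ 2 := by
    simpa only [real_inner_self_eq_norm_sq] using real_inner_mul_inner_self_le p q
  rw [norm_sub_sq_real, norm_add_sq_real]
  nlinarith

lemma two_mul_sub_inner_sub_one_eq (ha : a ^ 2 = 1 + ‖p‖ ^ 2) (hb : b ^ 2 = 1 + ‖q‖ ^ 2) :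
    2 * (a * b - inner ℝ p q - 1) = ‖p - q‖ ^ 2 - (a - b) ^ 2 := by
  rw [norm_sub_sq_real]
  linear_combination ha + hb

lemma mul_sub_sq_le (ha₀ : 0 ≤ a) (hb₀ : 0 ≤ b)
    (ha : a ^ 2 = 1 + ‖p‖ ^ 2) (hb : b ^ 2 = 1 + ‖q‖ ^ 2) :
    a * b * (a - b) ^ 2 ≤ (a * b - 1) * ‖p - q‖ ^ 2 := by
  have hab : 0 < (a + b) ^ 2 := by nlinarith
  refine le_of_mul_le_mul_right ?_ hab
  calc a * b * (a - b) ^ 2 * (a + b) ^ 2 = a * b * (‖p‖ ^ 2 - ‖q‖ ^ 2) ^ 2 := by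
        linear_combination a * b * (a ^ 2 - b ^ 2 + ‖p‖ ^ 2 - ‖q‖ ^ 2) * (ha - hb)
    _ ≤ a * b * ‖p + q‖ ^ 2 * ‖p - q‖ ^ 2 := by
        rw [mul_assoc _ (‖p + q‖ ^ 2), mul_comm (‖p + q‖ ^ 2)]
        exact mul_le_mul_of_nonneg_left (sq_norm_sq_sub_norm_sq_le p q) (mul_nonneg ha₀ hb₀)
    _ ≤ (a * b - 1) * (a + b) ^ 2 * ‖p - q‖ ^ 2 :=
        mul_le_mul_of_nonneg_right (mul_norm_add_sq_le ha₀ hb₀ ha hb) (sq_nonneg _)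
    _ = (a * b - 1) * ‖p - q‖ ^ 2 * (a + b) ^ 2 := by ring

end InnerProductSpace

lemma energy_pos (p : EuclideanSpace ℝ (Fin 3)) : 0 < energy p := Real.sqrt_pos.2 (by positivity)

lemma sq_energy (p : EuclideanSpace ℝ (Fin 3)) : energy p ^ 2 = 1 + ‖p‖ ^ 2 :=
  Real.sq_sqrt (by positivity)

lemma relMom_eq_sqrt (p q : EuclideanSpace ℝ (Fin 3)) :
    relMom p q = Real.sqrt (‖p - q‖ ^ 2 - (energy p - energy q) ^ 2) := by
  rw [relMom, two_mul_sub_inner_sub_one_eq (sq_energy p) (sq_energy q)]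

theorem relMom_bounds (p q : EuclideanSpace ℝ (Fin 3)) :
    ‖p - q‖ / Real.sqrt (energy p * energy q) ≤ relMom p q ∧ relMom p q ≤ ‖p - q‖ := by
  set a := energy p
  set b := energy q
  have hab : 0 < a * b := mul_pos (energy_pos p) (energy_pos q)
  have hkey := mul_sub_sq_le (energy_pos p).le (energy_pos q).le (sq_energy p) (sq_energy q)
  rw [relMom_eq_sqrt]
  constructor
  · rw [div_le_iff₀ (Real.sqrt_pos.2 hab), ← Real.sqrt_mul' _ hab.le,
      Real.le_sqrt (norm_nonneg _) (by nlinarith)]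
    nlinarith
  · rw [Real.sqrt_le_left (norm_nonneg _)]
    exact sub_le_self _ (sq_nonneg _)
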